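/- arXiv:1306.3073 — 3 statements merged into one kernel-verified Lean document; each statement's English description precedes it below -/
import Mathlib

section
/- For n ≥ 1 let r_n = 1/(4n(n+1)) and let B_n = {(x,y) ∈ ℝ² : ((x)² + (y − 1/n)²)^(1/2) < r_n} be the open disc of radius r_n centered at (0, 1/n). Define f : ℝ² → ℝ by: f(x,y) = 0 if y ≥ 0 and (x,y) ∉ ⋃_{n≥1} B_n; f(x,y) = 1/y if y < 0; and f(x,y) = n + tan((π/(2 r_n)) · ((x)² + (y − 1/n)²)^(1/2)) if (x,y) ∈ B_n. Let D(f) be the set of points of ℝ² at which f is not continuous. Then D(f) = (ℝ × {0}) ∪ ⋃_{n≥1} ∂B_n, and f takes the value 0 at every point of D(f), so the graph of f restricted to D(f) equals ((ℝ × {0}) ∪ ⋃_{n≥1} ∂B_n) × {0}; moreover this set is not locally connected at the point ((0,0),0), i.e., it is not a locally connected subspace of ℝ² × ℝ. -/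
open Set Topology Real Filter

/-- The radius `r n = 1/(4n(n+1))`. -/
noncomputable def exRadius (n : ℕ) : ℝ := 1 / (4 * n * (n + 1))

/-- The open disc `B n` of radius `r n` centered at `(0, 1/n)`. -/
def exDisc (n : ℕ) : Set (ℝ × ℝ) :=
  {p : ℝ × ℝ | Real.sqrt (p.1 ^ 2 + (p.2 - 1 / n) ^ 2) < exRadius n}

noncomputable def gfun (n : ℕ) (p : ℝ × ℝ) : ℝ :=
  Real.sqrt (p.1 ^ 2 + (p.2 - 1 / n) ^ 2)

lemma mem_exDisc {n : ℕ} {p : ℝ × ℝ} : p ∈ exDisc n ↔ gfun n p < exRadius n := Iff.rfl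

lemma gfun_nonneg (n : ℕ) (p : ℝ × ℝ) : 0 ≤ gfun n p := Real.sqrt_nonneg _

lemma continuous_gfun (n : ℕ) : Continuous (gfun n) := by
  apply Real.continuous_sqrt.comp
  fun_prop

lemma isOpen_exDisc (n : ℕ) : IsOpen (exDisc n) :=
  isOpen_lt (continuous_gfun n) continuous_const

lemma abs_fst_le_gfun (n : ℕ) (p : ℝ × ℝ) : |p.1| ≤ gfun n p := by
  rw [← Real.sqrt_sq_eq_abs]
  exact Real.sqrt_le_sqrt (by nlinarith [sq_nonneg (p.2 - 1 / (n:ℝ))])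

lemma abs_snd_le_gfun (n : ℕ) (p : ℝ × ℝ) : |p.2 - 1 / n| ≤ gfun n p := by
  rw [← Real.sqrt_sq_eq_abs]
  exact Real.sqrt_le_sqrt (by nlinarith [sq_nonneg p.1])

lemma sqrt_sq_add_sq_le (a b : ℝ) : Real.sqrt (a ^ 2 + b ^ 2) ≤ |a| + |b| := by
  rw [show |a| + |b| = Real.sqrt ((|a| + |b|) ^ 2) from
    (Real.sqrt_sq (by positivity)).symm]
  apply Real.sqrt_le_sqrt
  have := abs_nonneg a; have := abs_nonneg b
  nlinarith [sq_abs a, sq_abs b, mul_nonneg (abs_nonneg a) (abs_nonneg b)]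

lemma gfun_lipschitz (n : ℕ) (p q : ℝ × ℝ) :
    gfun n p ≤ gfun n q + (|p.1 - q.1| + |p.2 - q.2|) := by
  have habs : ∀ r : ℝ × ℝ, gfun n r = ‖(⟨r.1, r.2 - 1 / n⟩ : ℂ)‖ := by
    intro r
    rw [Complex.norm_def, Complex.normSq_mk, gfun]
    ring_nf
  have tri := norm_add_le (⟨q.1, q.2 - 1 / n⟩ : ℂ) ⟨p.1 - q.1, p.2 - q.2⟩
  have hsum : (⟨q.1, q.2 - 1/n⟩ + ⟨p.1 - q.1, p.2 - q.2⟩ : ℂ) = ⟨p.1, p.2 - 1/n⟩ := by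
    apply Complex.ext <;> simp
  rw [hsum] at tri
  have h2 : ‖(⟨p.1 - q.1, p.2 - q.2⟩ : ℂ)‖ ≤ |p.1 - q.1| + |p.2 - q.2| := by
    rw [Complex.norm_def, Complex.normSq_mk]
    calc Real.sqrt ((p.1-q.1) * (p.1-q.1) + (p.2-q.2) * (p.2-q.2))
        = Real.sqrt ((p.1-q.1)^2 + (p.2-q.2)^2) := by ring_nf
      _ ≤ _ := sqrt_sq_add_sq_le _ _
  rw [habs, habs]
  linarith

lemma exRadius_pos {n : ℕ} (hn : 1 ≤ n) : 0 < exRadius n := by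
  have : (1:ℝ) ≤ n := by exact_mod_cast hn
  unfold exRadius; positivity

lemma exRadius_le {n : ℕ} (hn : 1 ≤ n) : exRadius n ≤ 1 / n := by
  have h : (1:ℝ) ≤ n := by exact_mod_cast hn
  rw [exRadius, div_le_div_iff₀ (by positivity) (by positivity)]
  nlinarith

lemma exRadius_lt {n : ℕ} (hn : 1 ≤ n) : exRadius n < 1 / n := by
  have h : (1:ℝ) ≤ n := by exact_mod_cast hn
  rw [exRadius, div_lt_div_iff₀ (by positivity) (by positivity)]
  nlinarith

lemma gap {n : ℕ} (hn : 1 ≤ n) :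
    1 / ((n:ℝ) + 1) + exRadius (n + 1) < 1 / n - exRadius n := by
  have h : (1:ℝ) ≤ n := by exact_mod_cast hn
  have h0 : (0:ℝ) < n := by linarith
  rw [exRadius, exRadius]
  push_cast
  rw [div_add_div _ _ (by positivity) (by positivity),
    div_sub_div _ _ (by positivity) (by positivity),
    div_lt_div_iff₀ (by positivity) (by positivity)]
  ring_nf
  nlinarith [sq_nonneg ((n:ℝ))]

lemma mono_low {m n : ℕ} (hm : 1 ≤ m) (hmn : m ≤ n) :
    1 / (n:ℝ) - exRadius n ≤ 1 / m - exRadius m := by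
  induction n, hmn using Nat.le_induction with
  | base => exact le_refl _
  | succ k hk ih =>
    have hgap := gap (le_trans hm hk)
    have hr := exRadius_pos (n := k + 1) (by omega)
    push_cast at hgap ⊢
    linarith

lemma mono_high {m n : ℕ} (hn : 1 ≤ n) (hmn : n ≤ m) :
    1 / (m:ℝ) + exRadius m ≤ 1 / n + exRadius n := by
  have h1 : (1:ℝ) ≤ n := by exact_mod_cast hn
  have h2 : (n:ℝ) ≤ m := by exact_mod_cast hmn
  have hr : exRadius m ≤ exRadius n := by
    rw [exRadius, exRadius]
    apply one_div_le_one_div_of_le (by positivity)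
    nlinarith
  have : 1 / (m:ℝ) ≤ 1 / n := one_div_le_one_div_of_le (by positivity) h2
  linarith

lemma snd_bounds {n : ℕ} {p : ℝ × ℝ} (hn : 1 ≤ n) (h : gfun n p ≤ exRadius n) :
    1 / (n:ℝ) - exRadius n ≤ p.2 ∧ p.2 ≤ 1 / n + exRadius n := by
  have := abs_snd_le_gfun n p
  rw [abs_le] at this
  constructor <;> linarith [this.1, this.2]

lemma closed_disjoint {m n : ℕ} (hm : 1 ≤ m) (hn : 1 ≤ n) (hne : m ≠ n)
    {p : ℝ × ℝ} (h1 : gfun m p ≤ exRadius m) (h2 : gfun n p ≤ exRadius n) : False := by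
  rcases Nat.lt_or_ge m n with h | h
  · have b1 := (snd_bounds hm h1).1
    have b2 := (snd_bounds hn h2).2
    have hle : (1:ℝ) / n + exRadius n ≤ 1 / (m+1) + exRadius (m+1) := by
      have := mono_high (n := m + 1) (m := n) (by omega) (by omega)
      push_cast at this ⊢; linarith
    have := gap hm
    push_cast at hle
    linarith
  · have hlt : n < m := by omega
    have b1 := (snd_bounds hn h2).1
    have b2 := (snd_bounds hm h1).2
    have hle : (1:ℝ) / m + exRadius m ≤ 1 / (n+1) + exRadius (n+1) := by
      have := mono_high (n := n + 1) (m := m) (by omega) (by omega)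
      push_cast at this ⊢; linarith
    have := gap hn
    push_cast at hle
    linarith

lemma pos_of_mem_closedDisc {n : ℕ} {p : ℝ × ℝ} (hn : 1 ≤ n)
    (h : gfun n p ≤ exRadius n) : 0 < p.2 := by
  have := (snd_bounds hn h).1
  have := exRadius_lt hn
  linarith

lemma frontier_exDisc {n : ℕ} (hn : 1 ≤ n) :
    frontier (exDisc n) = {p | gfun n p = exRadius n} := by
  ext p
  constructor
  · intro hp
    have h1 : p ∈ closure (exDisc n) := hp.1
    have h2 : p ∉ exDisc n := by
      intro hmem
      exact hp.2 (by rwa [(isOpen_exDisc n).interior_eq])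
    have hle : gfun n p ≤ exRadius n := by
      have hcl : closure (exDisc n) ⊆ {q | gfun n q ≤ exRadius n} := by
        apply closure_minimal
        · intro q hq; exact le_of_lt (mem_exDisc.mp hq)
        · exact isClosed_le (continuous_gfun n) continuous_const
      exact hcl h1
    exact le_antisymm hle (not_lt.mp (fun h => h2 (mem_exDisc.mpr h)))
  · intro (hp : gfun n p = exRadius n)
    have hr := exRadius_pos hn
    constructor
    · -- p ∈ closure (exDisc n)
      have hseq : Tendsto (fun k : ℕ => ((1 - 1/(k+1)) * p.1,
          1/n + (1 - 1/(k+1)) * (p.2 - 1/n))) atTop (𝓝 p) := by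
        have ht : Tendsto (fun k : ℕ => 1 - 1/((k:ℝ)+1)) atTop (𝓝 1) := by
          have := tendsto_one_div_add_atTop_nhds_zero_nat (𝕜 := ℝ)
          simpa using (tendsto_const_nhds (x := (1:ℝ))).sub this
        have h1 : Tendsto (fun k : ℕ => (1 - 1/((k:ℝ)+1)) * p.1) atTop (𝓝 p.1) := by
          simpa using ht.mul_const p.1
        have h2 : Tendsto (fun k : ℕ => 1/(n:ℝ) + (1 - 1/((k:ℝ)+1)) * (p.2 - 1/n))
            atTop (𝓝 p.2) := by
          have := (ht.mul_const (p.2 - 1/(n:ℝ))).const_add (1/(n:ℝ))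
          simpa using this
        exact h1.prodMk_nhds h2
      apply mem_closure_of_tendsto hseq
      filter_upwards with k
      rw [mem_exDisc]
      have htk0 : (0:ℝ) ≤ 1 - 1/((k:ℝ)+1) := by
        have : 1/((k:ℝ)+1) ≤ 1 := by
          rw [div_le_one (by positivity)]; linarith [Nat.cast_nonneg (α := ℝ) k]
        linarith
      have htk1 : 1 - 1/((k:ℝ)+1) < 1 := by
        have : 0 < 1/((k:ℝ)+1) := by positivity
        linarith
      have hg : gfun n ((1 - 1/((k:ℝ)+1)) * p.1,
          1/n + (1 - 1/((k:ℝ)+1)) * (p.2 - 1/n)) = (1 - 1/((k:ℝ)+1)) * gfun n p := by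
        set t := 1 - 1/((k:ℝ)+1)
        show Real.sqrt _ = t * Real.sqrt _
        rw [show (t * p.1) ^ 2 + (1/(n:ℝ) + t * (p.2 - 1/n) - 1/n) ^ 2
            = t^2 * (p.1 ^ 2 + (p.2 - 1/(n:ℝ)) ^ 2) by ring,
          Real.sqrt_mul (sq_nonneg t), Real.sqrt_sq htk0]
      rw [hg, hp]
      calc (1 - 1/((k:ℝ)+1)) * exRadius n < 1 * exRadius n :=
            mul_lt_mul_of_pos_right htk1 hr
        _ = exRadius n := one_mul _
    · intro hmem
      rw [(isOpen_exDisc n).interior_eq] at hmem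
      exact absurd hp (ne_of_lt (mem_exDisc.mp hmem))

section F
variable {f : ℝ × ℝ → ℝ}
  (hf0 : ∀ p : ℝ × ℝ, 0 ≤ p.2 → (∀ n : ℕ, 1 ≤ n → p ∉ exDisc n) → f p = 0)
  (hfneg : ∀ p : ℝ × ℝ, p.2 < 0 → f p = 1 / p.2)
  (hfB : ∀ n : ℕ, 1 ≤ n → ∀ p ∈ exDisc n,
    f p = n + Real.tan (π / (2 * exRadius n) *
      Real.sqrt (p.1 ^ 2 + (p.2 - 1 / n) ^ 2)))

include hf0 in
lemma f_zero_line {p : ℝ × ℝ} (hp : p.2 = 0) : f p = 0 := by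
  apply hf0 p (le_of_eq hp.symm)
  intro n hn hmem
  have := pos_of_mem_closedDisc hn (le_of_lt (mem_exDisc.mp hmem))
  linarith

include hf0 in
lemma f_zero_sphere {n : ℕ} (hn : 1 ≤ n) {p : ℝ × ℝ} (hp : gfun n p = exRadius n) :
    f p = 0 := by
  apply hf0 p (le_of_lt (pos_of_mem_closedDisc hn (le_of_eq hp)))
  intro m hm hmem
  rcases eq_or_ne m n with rfl | hne
  · exact absurd hp (ne_of_lt (mem_exDisc.mp hmem))
  · exact closed_disjoint hm hn hne (le_of_lt (mem_exDisc.mp hmem)) (le_of_eq hp)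

include hf0 hfneg in
lemma discont_line {p : ℝ × ℝ} (hp : p.2 = 0) : ¬ ContinuousAt f p := by
  intro hc
  set seq : ℕ → ℝ × ℝ := fun k => (p.1, -(1/((k:ℝ)+1))) with hseqdef
  have hseq : Tendsto seq atTop (𝓝 p) := by
    have h2 : Tendsto (fun k : ℕ => -(1/((k:ℝ)+1))) atTop (𝓝 p.2) := by
      rw [hp]
      simpa using (tendsto_one_div_add_atTop_nhds_zero_nat (𝕜 := ℝ)).neg
    exact tendsto_const_nhds.prodMk_nhds h2
  have hto : Tendsto (fun k => f (seq k)) atTop (𝓝 0) := by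
    have := hc.tendsto.comp hseq
    rwa [f_zero_line hf0 hp] at this
  have hval : ∀ k : ℕ, f (seq k) = -((k:ℝ)+1) := by
    intro k
    rw [hfneg _ (by simp [hseqdef]; positivity)]
    show 1 / -(1/((k:ℝ)+1)) = _
    have hk : ((k:ℝ)+1) ≠ 0 := by positivity
    field_simp
  have hev := hto.eventually_const_lt (show (-1:ℝ) < 0 by norm_num)
  rcases hev.exists with ⟨k, hk⟩
  rw [hval k] at hk
  have : (0:ℝ) ≤ k := Nat.cast_nonneg k
  linarith

include hf0 hfB in
lemma discont_sphere {n : ℕ} (hn : 1 ≤ n) {p : ℝ × ℝ} (hp : gfun n p = exRadius n) :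
    ¬ ContinuousAt f p := by
  intro hc
  have hr := exRadius_pos hn
  set t : ℕ → ℝ := fun k => 2/π * Real.arctan ((k:ℝ)+1) with htdef
  have ht0 : ∀ k, 0 ≤ t k := fun k => by
    have h1 : 0 ≤ Real.arctan ((k:ℝ)+1) := by
      rw [← Real.arctan_zero]
      exact Real.arctan_strictMono.monotone (by positivity)
    have := Real.pi_pos
    positivity
  have ht1 : ∀ k, t k < 1 := fun k => by
    have h1 := Real.arctan_lt_pi_div_two ((k:ℝ)+1)
    have hπ := Real.pi_pos
    rw [htdef]
    calc 2/π * Real.arctan ((k:ℝ)+1) < 2/π * (π/2) :=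
          mul_lt_mul_of_pos_left h1 (by positivity)
      _ = 1 := by field_simp
  set seq : ℕ → ℝ × ℝ := fun k => (t k * p.1, 1/n + t k * (p.2 - 1/n)) with hseqdef
  have hgseq : ∀ k, gfun n (seq k) = t k * exRadius n := by
    intro k
    show Real.sqrt _ = _
    rw [show (t k * p.1) ^ 2 + (1/(n:ℝ) + t k * (p.2 - 1/n) - 1/n) ^ 2
        = (t k)^2 * (p.1 ^ 2 + (p.2 - 1/(n:ℝ)) ^ 2) by ring,
      Real.sqrt_mul (sq_nonneg _), Real.sqrt_sq (ht0 k)]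
    rw [← hp]; rfl
  have hmem : ∀ k, seq k ∈ exDisc n := by
    intro k
    rw [mem_exDisc, hgseq k]
    calc t k * exRadius n < 1 * exRadius n := mul_lt_mul_of_pos_right (ht1 k) hr
      _ = exRadius n := one_mul _
  have hval : ∀ k : ℕ, f (seq k) = n + ((k:ℝ)+1) := by
    intro k
    rw [hfB n hn _ (hmem k)]
    congr 1
    have : Real.sqrt ((seq k).1 ^ 2 + ((seq k).2 - 1/(n:ℝ)) ^ 2) = t k * exRadius n :=
      hgseq k
    rw [this, htdef]
    have hπ := Real.pi_pos
    rw [show π / (2 * exRadius n) * (2/π * Real.arctan ((k:ℝ)+1) * exRadius n)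
        = Real.arctan ((k:ℝ)+1) by field_simp]
    exact Real.tan_arctan _
  have hseqlim : Tendsto seq atTop (𝓝 p) := by
    have htlim : Tendsto t atTop (𝓝 1) := by
      have h1 : Tendsto (fun k : ℕ => (k:ℝ)+1) atTop atTop :=
        tendsto_natCast_atTop_atTop.atTop_add tendsto_const_nhds
      have h2 : Tendsto (fun k : ℕ => Real.arctan ((k:ℝ)+1)) atTop (𝓝 (π/2)) :=
        (Real.tendsto_arctan_atTop.mono_right nhdsWithin_le_nhds).comp h1
      have h3 := h2.const_mul (2/π)
      have hπ := Real.pi_ne_zero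
      rw [htdef]
      convert h3 using 2
      field_simp
    have h1 : Tendsto (fun k => t k * p.1) atTop (𝓝 p.1) := by
      simpa using htlim.mul_const p.1
    have h2 : Tendsto (fun k => 1/(n:ℝ) + t k * (p.2 - 1/n)) atTop (𝓝 p.2) := by
      have := (htlim.mul_const (p.2 - 1/(n:ℝ))).const_add (1/(n:ℝ))
      simpa using this
    exact h1.prodMk_nhds h2
  have hto : Tendsto (fun k => f (seq k)) atTop (𝓝 0) := by
    have := hc.tendsto.comp hseqlim
    rwa [f_zero_sphere hf0 hn hp] at this
  have hev := hto.eventually_lt_const (show (0:ℝ) < 1 by norm_num)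
  rcases hev.exists with ⟨k, hk⟩
  rw [hval k] at hk
  have h1 : (1:ℝ) ≤ n := by exact_mod_cast hn
  have : (0:ℝ) ≤ k := Nat.cast_nonneg k
  linarith
end F

section F
variable {f : ℝ × ℝ → ℝ}
  (hf0 : ∀ p : ℝ × ℝ, 0 ≤ p.2 → (∀ n : ℕ, 1 ≤ n → p ∉ exDisc n) → f p = 0)
  (hfneg : ∀ p : ℝ × ℝ, p.2 < 0 → f p = 1 / p.2)
  (hfB : ∀ n : ℕ, 1 ≤ n → ∀ p ∈ exDisc n,
    f p = n + Real.tan (π / (2 * exRadius n) *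
      Real.sqrt (p.1 ^ 2 + (p.2 - 1 / n) ^ 2)))

include hfneg in
lemma cont_neg {p : ℝ × ℝ} (hp : p.2 < 0) : ContinuousAt f p := by
  have hopen : IsOpen {q : ℝ × ℝ | q.2 < 0} := isOpen_lt continuous_snd continuous_const
  have hcont : ContinuousAt (fun q : ℝ × ℝ => 1 / q.2) p :=
    (continuousAt_const.div continuous_snd.continuousAt (ne_of_lt hp))
  apply hcont.congr
  filter_upwards [hopen.mem_nhds hp] with q hq
  exact (hfneg q hq).symm

include hfB in
lemma cont_disc {n : ℕ} (hn : 1 ≤ n) {p : ℝ × ℝ} (hp : p ∈ exDisc n) :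
    ContinuousAt f p := by
  have hr := exRadius_pos hn
  have hπ := Real.pi_pos
  have hcpos : 0 < π / (2 * exRadius n) := by positivity
  have hlt : π / (2 * exRadius n) * gfun n p < π / 2 := by
    calc π / (2 * exRadius n) * gfun n p < π / (2 * exRadius n) * exRadius n :=
        mul_lt_mul_of_pos_left (mem_exDisc.mp hp) hcpos
      _ = π / 2 := by field_simp
  have hge : 0 ≤ π / (2 * exRadius n) * gfun n p :=
    mul_nonneg (le_of_lt hcpos) (gfun_nonneg n p)
  have hcos : Real.cos (π / (2 * exRadius n) * gfun n p) ≠ 0 := by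
    apply ne_of_gt
    apply Real.cos_pos_of_mem_Ioo
    constructor
    · linarith
    · exact hlt
  have htan : ContinuousAt Real.tan (π / (2 * exRadius n) * gfun n p) :=
    Real.continuousAt_tan.mpr hcos
  have hcont : ContinuousAt (fun q : ℝ × ℝ =>
      (n : ℝ) + Real.tan (π / (2 * exRadius n) * gfun n q)) p := by
    apply ContinuousAt.add continuousAt_const
    exact ContinuousAt.comp (f := fun q : ℝ × ℝ => π / (2 * exRadius n) * gfun n q)
      htan ((continuous_const.mul (continuous_gfun n)).continuousAt)
  apply hcont.congr
  filter_upwards [(isOpen_exDisc n).mem_nhds hp] with q hq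
  exact (hfB n hn q hq).symm

include hf0 in
lemma cont_far {p : ℝ × ℝ} (hp : 0 < p.2)
    (hfar : ∀ n : ℕ, 1 ≤ n → exRadius n < gfun n p) : ContinuousAt f p := by
  obtain ⟨N, hN⟩ := exists_nat_gt (4 / p.2)
  have hN1 : 1 ≤ N := by
    have h4 : (0:ℝ) < 4 / p.2 := by positivity
    have : (0:ℝ) < N := lt_trans h4 hN
    exact Nat.cast_pos.mp this
  set δ := (Finset.Icc 1 N).inf' ⟨1, by simp [hN1]⟩ (fun n => gfun n p - exRadius n)
    with hδ
  have hδpos : 0 < δ := by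
    rw [hδ]; apply (Finset.lt_inf'_iff _).2
    intro n hn
    rw [Finset.mem_Icc] at hn
    linarith [hfar n hn.1]
  set ε := min (p.2/2) (δ/2) with hε
  have hεpos : 0 < ε := lt_min (by linarith) (by linarith)
  have hεp : ε ≤ p.2/2 := min_le_left _ _
  have hεδ : ε ≤ δ/2 := min_le_right _ _
  have key : ∀ q ∈ Metric.ball p (ε/2), f q = 0 := by
    intro q hq
    rw [Metric.mem_ball, Prod.dist_eq] at hq
    have hq1 : |q.1 - p.1| < ε/2 := by
      have := le_max_left (dist q.1 p.1) (dist q.2 p.2)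
      rw [Real.dist_eq] at this
      linarith [lt_of_le_of_lt this hq]
    have hq2 : |q.2 - p.2| < ε/2 := by
      have := le_max_right (dist q.1 p.1) (dist q.2 p.2)
      rw [Real.dist_eq] at this
      linarith [lt_of_le_of_lt this hq]
    have hq2' : p.2/2 < q.2 := by
      have := abs_lt.mp hq2
      linarith [this.1]
    apply hf0 q (by linarith)
    intro n hn hmem
    rw [mem_exDisc] at hmem
    rcases le_or_gt n N with hle | hlt
    · have hinf : δ ≤ gfun n p - exRadius n :=
        Finset.inf'_le _ (Finset.mem_Icc.mpr ⟨hn, hle⟩)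
      have hlip := gfun_lipschitz n p q
      rw [abs_sub_comm p.1 q.1, abs_sub_comm p.2 q.2] at hlip
      linarith
    · have h1n : (1:ℝ) ≤ n := by exact_mod_cast hn
      have hsnd := abs_snd_le_gfun n q
      have habs := (abs_lt.mp (lt_of_le_of_lt hsnd hmem)).2
      have hr_le := exRadius_le hn
      have h2 : q.2 < 2/(n:ℝ) := by
        have : q.2 < 1/(n:ℝ) + exRadius n := by linarith
        have h4 : q.2 < 1/(n:ℝ) + 1/(n:ℝ) := by linarith
        calc q.2 < 1/(n:ℝ) + 1/(n:ℝ) := h4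
          _ = 2/(n:ℝ) := by ring
      have hNn : (N:ℝ) + 1 ≤ n := by exact_mod_cast hlt
      have hNpos : (0:ℝ) < N := by exact_mod_cast hN1
      have h4 : 2/(n:ℝ) ≤ 2/(N:ℝ) :=
        div_le_div_of_nonneg_left (by norm_num) hNpos (by linarith)
      have h5 : 2/(N:ℝ) < p.2/2 := by
        rw [div_lt_iff₀ hNpos]
        rw [div_lt_iff₀ hp] at hN
        nlinarith
      linarith
  have hzero : f p = 0 := key p (Metric.mem_ball_self (by linarith))
  have : ContinuousAt (fun _ : ℝ × ℝ => (0:ℝ)) p := continuousAt_const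
  apply this.congr
  filter_upwards [Metric.ball_mem_nhds p (by linarith : (0:ℝ) < ε/2)] with q hq
  exact (key q hq).symm
end F

noncomputable def aFun (n : ℕ) : ℝ :=
  (1 / ((n:ℝ) + 1) + exRadius (n + 1) + (1 / n - exRadius n)) / 2

lemma aFun_lt {n : ℕ} (hn : 1 ≤ n) : aFun n < 1 / (n:ℝ) - exRadius n := by
  have := gap hn; rw [aFun]; linarith

lemma lt_aFun {n : ℕ} (hn : 1 ≤ n) : 1 / ((n:ℝ) + 1) + exRadius (n + 1) < aFun n := by
  have := gap hn; rw [aFun]; linarith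

lemma aFun_pos {n : ℕ} (hn : 1 ≤ n) : 0 < aFun n := by
  have h1 := lt_aFun hn
  have h2 := exRadius_pos (n := n + 1) (by omega)
  have h3 : (0:ℝ) < 1 / ((n:ℝ) + 1) := by positivity
  linarith

def bigD : Set (ℝ × ℝ) :=
  (Set.univ ×ˢ {(0 : ℝ)}) ∪ ⋃ n ∈ {n : ℕ | 1 ≤ n}, frontier (exDisc n)

lemma coverage {n : ℕ} (hn : 1 ≤ n) {p : ℝ × ℝ} (hp : p ∈ bigD) : p.2 ≠ aFun n := by
  rcases hp with hline | hcirc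
  · rw [hline.2]
    exact (aFun_pos hn).ne
  · simp only [mem_iUnion, mem_setOf_eq] at hcirc
    obtain ⟨m, hm, hpm⟩ := hcirc
    rw [frontier_exDisc hm] at hpm
    have hb := snd_bounds hm (le_of_eq hpm)
    rcases le_or_gt m n with hle | hlt
    · -- p.2 ≥ 1/m - r m ≥ 1/n - r n > aFun n
      have := mono_low hm hle
      have := aFun_lt hn
      intro h; rw [h] at hb; linarith [hb.1]
    · -- m ≥ n+1 : p.2 ≤ 1/m + r m ≤ 1/(n+1) + r (n+1) < aFun n
      have hmono := mono_high (n := n + 1) (m := m) (by omega) (by omega)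
      have hlta := lt_aFun hn
      push_cast at hmono
      intro h; rw [h] at hb; linarith [hb.2]

lemma origin_mem_bigD : ((0:ℝ), (0:ℝ)) ∈ bigD := Or.inl ⟨mem_univ _, rfl⟩

lemma topPoint_mem_bigD {n : ℕ} (hn : 1 ≤ n) :
    ((0:ℝ), 1/(n:ℝ) + exRadius n) ∈ bigD := by
  right
  simp only [mem_iUnion, mem_setOf_eq]
  refine ⟨n, hn, ?_⟩
  rw [frontier_exDisc hn]
  show Real.sqrt _ = _
  rw [show (0:ℝ) ^ 2 + (1/(n:ℝ) + exRadius n - 1/n) ^ 2 = (exRadius n) ^ 2 by ring]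
  exact Real.sqrt_sq (le_of_lt (exRadius_pos hn))

lemma not_locallyConnected :
    ¬ LocallyConnectedSpace ↥(bigD ×ˢ ({0} : Set ℝ)) := by
  intro hlc
  set G := bigD ×ˢ ({0} : Set ℝ) with hG
  have hx0 : (((0:ℝ), (0:ℝ)), (0:ℝ)) ∈ G := ⟨origin_mem_bigD, rfl⟩
  set x0 : ↥G := ⟨(((0:ℝ), (0:ℝ)), (0:ℝ)), hx0⟩ with hx0def
  obtain ⟨V, hVnhds, hVconn, -⟩ :=
    (locallyConnectedSpace_iff_connected_subsets.mp hlc) x0 univ univ_mem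
  rw [Metric.mem_nhds_iff] at hVnhds
  obtain ⟨ε, hε, hball⟩ := hVnhds
  obtain ⟨n, hn⟩ := exists_nat_gt (max 1 (2/ε))
  have hn1 : 1 ≤ n := by
    have h1 : (1:ℝ) < n := lt_of_le_of_lt (le_max_left _ _) hn
    exact_mod_cast h1.le
  have hn2 : 2/ε < n := lt_of_le_of_lt (le_max_right _ _) hn
  have hnpos : (0:ℝ) < n := by exact_mod_cast hn1
  -- the top point of circle n is within ε of x0
  have hz : (((0:ℝ), 1/(n:ℝ) + exRadius n), (0:ℝ)) ∈ G := ⟨topPoint_mem_bigD hn1, rfl⟩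
  set z : ↥G := ⟨(((0:ℝ), 1/(n:ℝ) + exRadius n), (0:ℝ)), hz⟩ with hzdef
  have htop_pos : 0 < 1/(n:ℝ) + exRadius n := by
    have := exRadius_pos hn1; positivity
  have hdist : dist z x0 < ε := by
    rw [Subtype.dist_eq, hzdef, hx0def, Prod.dist_eq, Prod.dist_eq]
    simp only [Real.dist_eq, sub_zero, abs_zero]
    rw [abs_of_pos htop_pos, max_eq_right htop_pos.le, max_eq_left htop_pos.le]
    have h2 : 1/(n:ℝ) + exRadius n ≤ 2/(n:ℝ) := by
      have := exRadius_le hn1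
      have h22 : 2/(n:ℝ) = 1/n + 1/n := by ring
      linarith
    have h3 : 2/(n:ℝ) < ε := by
      rw [div_lt_iff₀ hnpos]
      rw [div_lt_iff₀ hε] at hn2
      nlinarith
    linarith
  have hzV : z ∈ V := hball hdist
  have hx0V : x0 ∈ V := by
    apply mem_of_mem_nhds
    rw [Metric.mem_nhds_iff]
    exact ⟨ε, hε, hball⟩
  -- split G by the height aFun n
  set u : Set ↥G := {w | (w : (ℝ × ℝ) × ℝ).1.2 < aFun n} with hu
  set v : Set ↥G := {w | aFun n < (w : (ℝ × ℝ) × ℝ).1.2} with hv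
  have hcont : Continuous (fun w : ↥G => (w : (ℝ × ℝ) × ℝ).1.2) :=
    continuous_subtype_val.fst.snd
  have hou : IsOpen u := isOpen_lt hcont continuous_const
  have hov : IsOpen v := isOpen_lt continuous_const hcont
  have hcover : V ⊆ u ∪ v := by
    intro w _
    have hw : (w : (ℝ × ℝ) × ℝ).1 ∈ bigD := w.2.1
    rcases lt_or_gt_of_ne (coverage hn1 hw) with h | h
    · exact Or.inl h
    · exact Or.inr h
  have hnu : (V ∩ u).Nonempty := ⟨x0, hx0V, by
    show ((0:ℝ), (0:ℝ)).2 < aFun n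
    exact aFun_pos hn1⟩
  have hnv : (V ∩ v).Nonempty := ⟨z, hzV, by
    show aFun n < ((0:ℝ), 1/(n:ℝ) + exRadius n).2
    have h1 := aFun_lt hn1
    have h2 := exRadius_pos hn1
    show aFun n < 1/(n:ℝ) + exRadius n
    linarith⟩
  obtain ⟨w, -, hwu, hwv⟩ := hVconn u v hou hov hcover hnu hnv
  simp only [hu, mem_setOf_eq] at hwu
  simp only [hv, mem_setOf_eq] at hwv
  linarith

/-- For the example function `f`, the set of discontinuity points is
`(ℝ × {0}) ∪ ⋃_{n ≥ 1} ∂Bₙ`, `f` vanishes on it, the graph of `f` restricted to it is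
`((ℝ × {0}) ∪ ⋃_{n ≥ 1} ∂Bₙ) × {0}`, and this set is not a locally connected subspace. -/
theorem stmt11 (f : ℝ × ℝ → ℝ)
    (hf0 : ∀ p : ℝ × ℝ, 0 ≤ p.2 → (∀ n : ℕ, 1 ≤ n → p ∉ exDisc n) → f p = 0)
    (hfneg : ∀ p : ℝ × ℝ, p.2 < 0 → f p = 1 / p.2)
    (hfB : ∀ n : ℕ, 1 ≤ n → ∀ p ∈ exDisc n,
      f p = n + Real.tan (π / (2 * exRadius n) *
        Real.sqrt (p.1 ^ 2 + (p.2 - 1 / n) ^ 2)))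
    : {p : ℝ × ℝ | ¬ ContinuousAt f p} =
        (Set.univ ×ˢ {(0 : ℝ)}) ∪ ⋃ n ∈ {n : ℕ | 1 ≤ n}, frontier (exDisc n) ∧
      (∀ p ∈ {p : ℝ × ℝ | ¬ ContinuousAt f p}, f p = 0) ∧
      (fun p => (p, f p)) '' {p : ℝ × ℝ | ¬ ContinuousAt f p} =
        ((Set.univ ×ˢ {(0 : ℝ)}) ∪ ⋃ n ∈ {n : ℕ | 1 ≤ n}, frontier (exDisc n)) ×ˢ
          {(0 : ℝ)} ∧
      ¬ LocallyConnectedSpace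
        ((fun p => (p, f p)) '' {p : ℝ × ℝ | ¬ ContinuousAt f p}) := by
  have hset : {p : ℝ × ℝ | ¬ ContinuousAt f p} = bigD := by
    ext p
    simp only [mem_setOf_eq]
    constructor
    · intro hdc
      by_contra hnot
      apply hdc
      rw [bigD, mem_union] at hnot
      push_neg at hnot
      obtain ⟨hline, hcirc⟩ := hnot
      have hp2 : p.2 ≠ 0 := by
        intro h
        exact hline ⟨mem_univ _, h⟩
      have hfr : ∀ n : ℕ, 1 ≤ n → gfun n p ≠ exRadius n := by
        intro n hn heq
        apply hcirc
        simp only [mem_iUnion, mem_setOf_eq]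
        exact ⟨n, hn, (frontier_exDisc hn).symm ▸ heq⟩
      rcases lt_trichotomy p.2 0 with h | h | h
      · exact cont_neg hfneg h
      · exact absurd h hp2
      · by_cases hd : ∃ n : ℕ, 1 ≤ n ∧ p ∈ exDisc n
        · obtain ⟨n, hn, hmem⟩ := hd
          exact cont_disc hfB hn hmem
        · push_neg at hd
          apply cont_far hf0 h
          intro n hn
          have h1 : ¬ gfun n p < exRadius n := fun hlt => hd n hn (mem_exDisc.mpr hlt)
          exact lt_of_le_of_ne (not_lt.mp h1) (Ne.symm (hfr n hn))
    · intro hp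
      rcases hp with hline | hcirc
      · exact discont_line hf0 hfneg hline.2
      · simp only [mem_iUnion, mem_setOf_eq] at hcirc
        obtain ⟨n, hn, hpn⟩ := hcirc
        rw [frontier_exDisc hn] at hpn
        exact discont_sphere hf0 hfB hn hpn
  have hzero : ∀ p ∈ {p : ℝ × ℝ | ¬ ContinuousAt f p}, f p = 0 := by
    intro p hp
    rw [hset] at hp
    rcases hp with hline | hcirc
    · exact f_zero_line hf0 hline.2
    · simp only [mem_iUnion, mem_setOf_eq] at hcirc
      obtain ⟨n, hn, hpn⟩ := hcirc
      rw [frontier_exDisc hn] at hpn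
      exact f_zero_sphere hf0 hn hpn
  have himg : (fun p => (p, f p)) '' {p : ℝ × ℝ | ¬ ContinuousAt f p} =
      bigD ×ˢ ({0} : Set ℝ) := by
    ext q
    constructor
    · rintro ⟨p, hp, rfl⟩
      exact ⟨hset ▸ hp, hzero p hp⟩
    · rintro ⟨hq1, hq2⟩
      refine ⟨q.1, hset.symm ▸ hq1, ?_⟩
      have hfq : f q.1 = 0 := hzero q.1 (hset.symm ▸ hq1)
      simp only [mem_singleton_iff] at hq2
      show (q.1, f q.1) = q
      rw [hfq, hq2.symm]
  refine ⟨hset, hzero, himg, ?_⟩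
  rw [himg]
  exact not_locallyConnected
end

section
/- If A ⊆ ℝ² is a locally connected continuum and S_1, …, S_n are the (finitely many) connected components of ℝ² \ A, then each S_i is open in ℝ² and ∂A = ∂(⋃_{i=1}^n S_i) = ⋃_{i=1}^n ∂S_i. -/
open Set Topology

/-- If `A ⊆ ℝ²` is a locally connected continuum and `S 1, …, S n` are the
(finitely many) connected components of `ℝ² \ A`, then each `S i` is open in `ℝ²` and
`∂A = ∂(⋃ i, S i) = ⋃ i, ∂(S i)`. -/
theorem stmt13 (A : Set (ℝ × ℝ)) (hAcomp : IsCompact A) (hAconn : IsConnected A)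
    (hAlc : LocallyConnectedSpace A)
    (n : ℕ) (S : Fin n → Set (ℝ × ℝ))
    (hScomp : ∀ i, ∃ x ∈ Aᶜ, S i = connectedComponentIn Aᶜ x)
    (hSall : ∀ x ∈ Aᶜ, ∃ i, connectedComponentIn Aᶜ x = S i)
    (hSdisj : Pairwise fun i j => Disjoint (S i) (S j)) :
    (∀ i, IsOpen (S i)) ∧
      frontier A = frontier (⋃ i, S i) ∧
      frontier A = ⋃ i, frontier (S i) := by
  have hAclosed : IsClosed A := hAcomp.isClosed
  have hopenC : IsOpen Aᶜ := hAclosed.isOpen_compl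
  have hopen : ∀ i, IsOpen (S i) := by
    intro i
    obtain ⟨x, -, hx⟩ := hScomp i
    rw [hx]
    exact hopenC.connectedComponentIn
  have hUnion : (⋃ i, S i) = Aᶜ := by
    apply subset_antisymm
    · refine iUnion_subset fun i => ?_
      obtain ⟨x, -, hx⟩ := hScomp i
      rw [hx]; exact connectedComponentIn_subset _ _
    · intro x hx
      obtain ⟨i, hi⟩ := hSall x hx
      exact mem_iUnion.2 ⟨i, hi ▸ mem_connectedComponentIn hx⟩
  have hfrA : frontier A = A ∩ closure Aᶜ := by
    rw [frontier, hAclosed.closure_eq, diff_eq, closure_compl]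
  refine ⟨hopen, ?_, ?_⟩
  · rw [hUnion, frontier_compl]
  · apply subset_antisymm
    · intro x hx
      rw [hfrA] at hx
      have hxc : x ∈ closure (⋃ i, S i) := by rw [hUnion]; exact hx.2
      rw [closure_iUnion_of_finite] at hxc
      obtain ⟨i, hi⟩ := mem_iUnion.1 hxc
      refine mem_iUnion.2 ⟨i, hi, ?_⟩
      rw [(hopen i).interior_eq]
      intro hxi
      exact (hUnion ▸ (subset_iUnion S i) hxi : x ∈ Aᶜ) hx.1
    · refine iUnion_subset fun i => ?_
      intro x hx
      rw [frontier, (hopen i).interior_eq] at hx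
      rw [hfrA]
      constructor
      · -- x ∈ closure (S i) \ S i; show x ∈ A
        by_contra hxA
        have hxC : x ∈ Aᶜ := hxA
        obtain ⟨j, hj⟩ := hSall x hxC
        have hxj : x ∈ S j := hj ▸ mem_connectedComponentIn hxC
        have hij : j ≠ i := by
          rintro rfl; exact hx.2 hxj
        have hd : Disjoint (S j) (closure (S i)) :=
          (hSdisj hij).closure_right (hopen j)
        exact hd.ne_of_mem hxj hx.1 rfl
      · exact closure_mono (hUnion ▸ subset_iUnion S i) hx.1
end

section
/- Let X be a connected, locally connected, locally compact, second-countable metrizable space, let E ⊆ X be a continuum, and let V ⊆ X be a connected open set containing E whose closure is compact, such that V is locally arcwise-connected. Then there exists a continuous surjection g : [0,1] → F_0 onto a set F_0 with E ⊆ F_0 ⊆ V; consequently F_0 is a locally connected continuum containing E and contained in V. -/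
open Set Topology Metric Filter

section aux
variable {X : Type*} [MetricSpace X]

/-- Uniform local path connectedness near a compact set. -/
lemma stmt14_ulp {E V : Set X} (hEcomp : IsCompact E)
    (hVopen : IsOpen V) (hEV : E ⊆ V) (hVlac : LocPathConnectedSpace V)
    {ε : ℝ} (hε : 0 < ε) :
    ∃ δ > 0, ∀ x ∈ E, ∀ y ∈ E, dist x y < δ →
      ∃ p : Path x y, (∀ s, p s ∈ V) ∧ (∀ s, dist (p s) x < ε) := by
  have key : ∀ z : E, ∃ U : Set X, U ∈ 𝓝 (z : X) ∧ U ⊆ ball (z : X) (ε/2) ∧ U ⊆ V ∧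
      ∀ x ∈ U, ∀ y ∈ U, ∃ p : Path x y, ∀ s, p s ∈ U := by
    rintro ⟨z, hz⟩
    haveI : LocallyPathConnectedSpace V := hVlac
    have hzV : z ∈ V := hEV hz
    set z' : V := ⟨z, hzV⟩
    have hW : (Subtype.val ⁻¹' ball z (ε/2) : Set V) ∈ 𝓝 z' :=
      (isOpen_ball.preimage continuous_subtype_val).mem_nhds (by
        simp [z', mem_ball, dist_self, half_pos hε])
    obtain ⟨P, ⟨hPn, hPc⟩, hPsub⟩ := (path_connected_basis z').mem_iff.mp hW
    refine ⟨Subtype.val '' P, ?_, ?_, ?_, ?_⟩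
    · have := hVopen.isOpenEmbedding_subtypeVal.map_nhds_eq z'
      rw [← this]
      exact Filter.image_mem_map hPn
    · rintro x ⟨x', hx', rfl⟩
      exact hPsub hx'
    · rintro x ⟨x', _, rfl⟩
      exact x'.2
    · rintro x ⟨x', hx', rfl⟩ y ⟨y', hy', rfl⟩
      obtain ⟨γ, hγ⟩ := hPc.joinedIn x' hx' y' hy'
      refine ⟨γ.map continuous_subtype_val, fun s => ⟨γ s, hγ s, rfl⟩⟩
  choose U hUn hUball hUV hUpath using key
  obtain ⟨δ, hδ, hcov⟩ := lebesgue_number_lemma_of_metric hEcomp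
    (c := fun z : E => interior (U z)) (fun _ => isOpen_interior)
    (fun x hx => mem_iUnion.mpr ⟨⟨x, hx⟩, mem_interior_iff_mem_nhds.mpr (hUn ⟨x, hx⟩)⟩)
  refine ⟨δ, hδ, fun x hx y hy hxy => ?_⟩
  obtain ⟨z, hz⟩ := hcov x hx
  have hxU : x ∈ U z := interior_subset (hz (mem_ball_self hδ))
  have hyU : y ∈ U z := interior_subset (hz (by rwa [mem_ball, dist_comm]))
  obtain ⟨p, hp⟩ := hUpath z x hxU y hyU
  refine ⟨p, fun s => hUV z (hp s), fun s => ?_⟩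
  have h1 : dist (p s) (z : X) < ε/2 := hUball z (hp s)
  have h2 : dist x (z : X) < ε/2 := hUball z hxU
  calc dist (p s) x ≤ dist (p s) (z : X) + dist x (z : X) := dist_triangle_right _ _ _
    _ < ε := by linarith

/-- Any two points of a connected set `E ⊆ V` are joined by a path in `V`
staying within distance `ρ` of `E`. -/
lemma stmt14_chainpath {E V : Set X} (hEcomp : IsCompact E) (hEconn : IsConnected E)
    (hVopen : IsOpen V) (hEV : E ⊆ V) (hVlac : LocPathConnectedSpace V)
    {ρ : ℝ} (hρ : 0 < ρ) :
    ∀ x ∈ E, ∀ y ∈ E, ∃ p : Path x y, (∀ s, p s ∈ V) ∧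
      (∀ s, ∃ e ∈ E, dist (p s) e ≤ ρ) := by
  obtain ⟨δ, hδ, hpath⟩ := stmt14_ulp hEcomp hVopen hEV hVlac hρ
  intro x hx y hy
  set R : X → X → Prop := fun u v => u ∈ E ∧ v ∈ E ∧ dist u v < δ with hR
  have key : ∀ w ∈ E, Relation.ReflTransGen R x w := by
    by_contra hcon
    push_neg at hcon
    obtain ⟨w, hwE, hw⟩ := hcon
    set S : Set X := {u | u ∈ E ∧ Relation.ReflTransGen R x u} with hS
    set A : Set X := ⋃ u ∈ S, ball u δ with hA
    set B : Set X := ⋃ u ∈ E \ S, ball u δ with hB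
    have hAo : IsOpen A := isOpen_biUnion fun _ _ => isOpen_ball
    have hBo : IsOpen B := isOpen_biUnion fun _ _ => isOpen_ball
    have hcover : E ⊆ A ∪ B := by
      intro e he
      by_cases heS : e ∈ S
      · exact Or.inl (mem_biUnion heS (mem_ball_self hδ))
      · exact Or.inr (mem_biUnion ⟨he, heS⟩ (mem_ball_self hδ))
    have hAx : (E ∩ A).Nonempty := ⟨x, hx, mem_biUnion ⟨hx, Relation.ReflTransGen.refl⟩
      (mem_ball_self hδ)⟩
    have hwS : w ∉ S := fun h => hw h.2
    have hBw : (E ∩ B).Nonempty := ⟨w, hwE, mem_biUnion ⟨hwE, hwS⟩ (mem_ball_self hδ)⟩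
    obtain ⟨e, heE, heAB⟩ := hEconn.isPreconnected A B hAo hBo hcover hAx hBw
    obtain ⟨heA, heB⟩ := heAB
    obtain ⟨u, huS, heu⟩ := mem_iUnion₂.mp heA
    obtain ⟨u', hu'ES, heu'⟩ := mem_iUnion₂.mp heB
    apply hu'ES.2
    have st1 : Relation.ReflTransGen R x e :=
      huS.2.tail ⟨huS.1, heE, by rwa [mem_ball, dist_comm] at heu⟩
    exact ⟨hu'ES.1, st1.tail ⟨heE, hu'ES.1, by rwa [mem_ball] at heu'⟩⟩
  have main : ∀ w, Relation.ReflTransGen R x w → ∃ p : Path x w, (∀ s, p s ∈ V) ∧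
      (∀ s, ∃ e ∈ E, dist (p s) e ≤ ρ) := by
    intro w hw
    induction hw with
    | refl =>
        exact ⟨Path.refl x, fun s => hEV hx, fun s => ⟨x, hx, by show dist x x ≤ ρ; simp [hρ.le]⟩⟩
    | tail hxb hbc ih =>
        obtain ⟨hbE, hcE, hbc'⟩ := hbc
        obtain ⟨p₁, hp₁V, hp₁E⟩ := ih
        obtain ⟨p₂, hp₂V, hp₂d⟩ := hpath _ hbE _ hcE hbc'
        refine ⟨p₁.trans p₂, fun s => ?_, fun s => ?_⟩
        · have : (p₁.trans p₂) s ∈ range ⇑p₁ ∪ range ⇑p₂ := by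
            rw [← Path.trans_range]; exact mem_range_self s
          rcases this with ⟨s', hs'⟩ | ⟨s', hs'⟩
          · rw [← hs']; exact hp₁V s'
          · rw [← hs']; exact hp₂V s'
        · have : (p₁.trans p₂) s ∈ range ⇑p₁ ∪ range ⇑p₂ := by
            rw [← Path.trans_range]; exact mem_range_self s
          rcases this with ⟨s', hs'⟩ | ⟨s', hs'⟩
          · rw [← hs']; exact hp₁E s'
          · rw [← hs']; exact ⟨_, hbE, (hp₂d s').le⟩
  exact main y (key y hy)




/-- The basic loop: go from `q` to `f`, pause, and come back, with constant zones. -/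
noncomputable def stmt14H {q f : X} (p : Path q f) : ℝ → X := fun s =>
  if s ≤ 1/5 then q else if s ≤ 2/5 then p.extend (5*s - 1)
  else if s ≤ 3/5 then f else if s ≤ 4/5 then p.extend (4 - 5*s) else q

lemma stmt14H_cont {q f : X} (p : Path q f) : Continuous (stmt14H p) := by
  unfold stmt14H
  have e1 : p.extend (5 * (1/5 : ℝ) - 1) = q := by norm_num
  have e2 : p.extend (5 * (2/5 : ℝ) - 1) = f := by norm_num
  have e4 : p.extend (4 - 5 * (4/5 : ℝ)) = q := by norm_num
  apply Continuous.if_le continuous_const ?_ continuous_id continuous_const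
  · intro s hs
    simp only [id] at hs
    subst hs
    rw [if_pos (by norm_num : (1:ℝ)/5 ≤ 2/5)]
    exact e1.symm
  apply Continuous.if_le (p.continuous_extend.comp (by continuity)) ?_
      continuous_id continuous_const
  · intro s hs
    simp only [id] at hs
    subst hs
    rw [if_pos (by norm_num : (2:ℝ)/5 ≤ 3/5)]
    exact e2
  apply Continuous.if_le continuous_const ?_ continuous_id continuous_const
  · intro s hs
    simp only [id] at hs
    subst hs
    rw [if_pos (by norm_num : (3:ℝ)/5 ≤ 4/5)]
    norm_num
  apply Continuous.if_le (p.continuous_extend.comp (by continuity)) continuous_const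
      continuous_id continuous_const
  intro s hs
  simp only [id] at hs
  subst hs
  exact e4

lemma stmt14H_range {q f : X} (p : Path q f) : ∀ s, stmt14H p s ∈ range ⇑p := by
  intro s
  have hq : q ∈ range ⇑p := ⟨0, p.source⟩
  have hf : f ∈ range ⇑p := ⟨1, p.target⟩
  have hx : ∀ x : ℝ, p.extend x ∈ range ⇑p := fun x => by
    rw [← Path.extend_range]; exact mem_range_self x
  unfold stmt14H
  split_ifs <;> first | exact hq | exact hf | apply hx

lemma stmt14H_left {q f : X} (p : Path q f) {s : ℝ} (hs : s ≤ 1/5) : stmt14H p s = q :=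
  if_pos hs

lemma stmt14H_mid {q f : X} (p : Path q f) {s : ℝ} (hs1 : 2/5 ≤ s) (hs2 : s ≤ 3/5) :
    stmt14H p s = f := by
  unfold stmt14H
  rw [if_neg (by linarith)]
  by_cases h2 : s ≤ 2/5
  · have : s = 2/5 := le_antisymm h2 hs1
    subst this
    rw [if_pos le_rfl]
    norm_num
  · rw [if_neg h2, if_pos hs2]

lemma stmt14H_right {q f : X} (p : Path q f) {s : ℝ} (hs : 4/5 ≤ s) : stmt14H p s = q := by
  unfold stmt14H
  rw [if_neg (by linarith), if_neg (by linarith), if_neg (by linarith)]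
  by_cases h4 : s ≤ 4/5
  · have : s = 4/5 := le_antisymm h4 hs
    subst this
    rw [if_pos le_rfl]
    norm_num
  · rw [if_neg h4]

/-- Modify a curve on an interval where it is constant. -/
lemma stmt14_mod1 {g : ℝ → X} (hg : Continuous g)
    {a b : ℝ} (hab : a < b) {q f : X} (hconst : ∀ t ∈ Icc a b, g t = q)
    (p : Path q f) :
    ∃ g' : ℝ → X, Continuous g' ∧ (∀ t, t ∉ Icc a b → g' t = g t) ∧
      (∀ t ∈ Icc a b, g' t ∈ range ⇑p) ∧
      (∀ t ∈ Icc a (a + (b-a)/5), g' t = q) ∧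
      (∀ t ∈ Icc (a + 2*(b-a)/5) (a + 3*(b-a)/5), g' t = f) ∧
      (∀ t ∈ Icc (a + 4*(b-a)/5) b, g' t = q) := by
  have hw : 0 < b - a := sub_pos.mpr hab
  classical
  refine ⟨(Icc a b).piecewise (fun t => stmt14H p ((t - a)/(b - a))) g, ?_, ?_, ?_, ?_, ?_, ?_⟩
  · apply Continuous.piecewise ?_ ((stmt14H_cont p).comp (by continuity)) hg
    intro t ht
    rw [frontier_Icc hab.le] at ht
    rcases ht with rfl | rfl
    · show stmt14H p ((t - t)/(b - t)) = g t
      rw [sub_self, zero_div, stmt14H_left p (by norm_num)]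
      exact (hconst t ⟨le_refl t, hab.le⟩).symm
    · show stmt14H p ((t - a)/(t - a)) = g t
      rw [div_self hw.ne', stmt14H_right p (by norm_num)]
      exact (hconst t ⟨hab.le, le_refl t⟩).symm
  · exact fun t ht => Set.piecewise_eq_of_notMem _ _ _ ht
  · intro t ht
    rw [Set.piecewise_eq_of_mem _ _ _ ht]
    exact stmt14H_range p _
  · intro t ht
    have htab : t ∈ Icc a b := ⟨ht.1, ht.2.trans (by linarith)⟩
    rw [Set.piecewise_eq_of_mem _ _ _ htab]
    exact stmt14H_left p (by rw [div_le_div_iff₀ hw (by norm_num)]; linarith [ht.2])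
  · intro t ht
    have htab : t ∈ Icc a b := ⟨by linarith [ht.1], by linarith [ht.2]⟩
    rw [Set.piecewise_eq_of_mem _ _ _ htab]
    exact stmt14H_mid p
      (by rw [div_le_div_iff₀ (by norm_num) hw]; linarith [ht.1])
      (by rw [div_le_div_iff₀ hw (by norm_num)]; linarith [ht.2])
  · intro t ht
    have htab : t ∈ Icc a b := ⟨by linarith [ht.1], ht.2⟩
    rw [Set.piecewise_eq_of_mem _ _ _ htab]
    exact stmt14H_right p (by rw [div_le_div_iff₀ (by norm_num) hw]; linarith [ht.1])



/-- Invariant for the inductive construction: a continuous curve `g₁` with a finite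
family `Z` of disjoint "zones" (closed subintervals of `[0,1]`) on which it is
constant with values in `E`, which is `ε`-dense in `E` (witnessed on untouched zones
of the reference curve `g`), stays in `V` within `r` of `E`, and is uniformly
`ρ`-close to the reference curve `g`. -/
def stmt14TINV (E V : Set X) (r ρ ε : ℝ) (g g₁ : ℝ → X) (Z : Finset (ℝ × ℝ)) : Prop :=
  Continuous g₁ ∧
  (∀ z ∈ Z, 0 ≤ z.1 ∧ z.1 < z.2 ∧ z.2 ≤ 1) ∧
  (∀ z ∈ Z, ∀ z' ∈ Z, z ≠ z' → z.2 < z'.1 ∨ z'.2 < z.1) ∧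
  (∀ z ∈ Z, ∀ t ∈ Icc z.1 z.2, g₁ t = g₁ z.1) ∧
  (∀ z ∈ Z, g₁ z.1 ∈ E) ∧
  (∀ e ∈ E, ∃ z ∈ Z, dist (g z.1) e ≤ ε ∧ ∀ t ∈ Icc z.1 z.2, g₁ t = g t) ∧
  (∀ t, g₁ t ∈ V ∧ ∃ e ∈ E, dist (g₁ t) e ≤ r) ∧
  (∀ t, dist (g₁ t) (g t) ≤ ρ)

lemma stmt14_step {E V : Set X} {r ρ ε : ℝ}
    (hpath : ∀ q ∈ E, ∀ f ∈ E, dist q f ≤ ε →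
      ∃ p : Path q f, (∀ s, p s ∈ V) ∧ (∀ s, dist (p s) q ≤ ρ) ∧
        (∀ s, ∃ e ∈ E, dist (p s) e ≤ r))
    {g g₁ : ℝ → X} {Z₁ : Finset (ℝ × ℝ)} (h : stmt14TINV E V r ρ ε g g₁ Z₁)
    {f : X} (hf : f ∈ E) :
    ∃ g₂ Z₂, stmt14TINV E V r ρ ε g g₂ Z₂ ∧ (∃ z ∈ Z₂, g₂ z.1 = f) ∧
      (∀ x, (∃ z ∈ Z₁, g₁ z.1 = x) → ∃ z ∈ Z₂, g₂ z.1 = x) := by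
  classical
  obtain ⟨hg₁c, hbnd, hdisj, hcst, hval, hdens, hVr, hmove⟩ := h
  obtain ⟨z, hz, hzd, hzsame⟩ := hdens f hf
  obtain ⟨hz0, hz12, hz1⟩ := hbnd z hz
  set q : X := g₁ z.1 with hq
  have hqE : q ∈ E := hval z hz
  have hq_orig : g z.1 = q := (hzsame z.1 ⟨le_rfl, hz12.le⟩).symm
  have hqf : dist q f ≤ ε := by rw [← hq_orig]; exact hzd
  obtain ⟨p, hpV, hpmove, hpr⟩ := hpath q hqE f hf hqf
  obtain ⟨g₂, hg₂c, hout, hin, hzone1, hzone2, hzone3⟩ :=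
    stmt14_mod1 hg₁c hz12 (hcst z hz) p
  set w : ℝ := z.2 - z.1 with hwdef
  have hw : 0 < w := sub_pos.mpr hz12
  set A : ℝ × ℝ := (z.1, z.1 + w/5) with hA
  set B : ℝ × ℝ := (z.1 + 2*w/5, z.1 + 3*w/5) with hB
  set C : ℝ × ℝ := (z.1 + 4*w/5, z.2) with hC
  set Z₂ : Finset (ℝ × ℝ) := insert A (insert B (insert C (Z₁.erase z))) with hZ₂
  have hmemZ₂ : ∀ y ∈ Z₂, y = A ∨ y = B ∨ y = C ∨ (y ∈ Z₁ ∧ y ≠ z) := by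
    intro y hy
    simp only [hZ₂, Finset.mem_insert, Finset.mem_erase] at hy
    tauto
  -- new zones are inside the old zone
  have hsubN : ∀ y : ℝ × ℝ, y = A ∨ y = B ∨ y = C → z.1 ≤ y.1 ∧ y.1 < y.2 ∧ y.2 ≤ z.2 := by
    rintro y (rfl | rfl | rfl) <;>
      exact ⟨by simp [hA, hB, hC] <;> linarith, by simp [hA, hB, hC] <;> linarith,
        by simp [hA, hB, hC] <;> linarith⟩
  -- old zones (≠ z) are disjoint from the old zone z
  have hold : ∀ z' ∈ Z₁, z' ≠ z → ∀ t ∈ Icc z'.1 z'.2, t ∉ Icc z.1 z.2 := by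
    intro z' hz' hne t ht hmem
    rcases hdisj z' hz' z hz hne with h' | h'
    · exact absurd (ht.2.trans_lt (h'.trans_le hmem.1)) (lt_irrefl t).elim
    · exact absurd (hmem.2.trans_lt (h'.trans_le ht.1)) (lt_irrefl t).elim
  have hg₂old : ∀ z' ∈ Z₁, z' ≠ z → ∀ t ∈ Icc z'.1 z'.2, g₂ t = g₁ t :=
    fun z' hz' hne t ht => hout t (hold z' hz' hne t ht)
  -- values of g₂ on the new zones
  have hvA : ∀ t ∈ Icc A.1 A.2, g₂ t = q := hzone1
  have hvB : ∀ t ∈ Icc B.1 B.2, g₂ t = f := by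
    intro t ht
    exact hzone2 t (by simpa [hB, hwdef] using ht)
  have hvC : ∀ t ∈ Icc C.1 C.2, g₂ t = q := by
    intro t ht
    exact hzone3 t (by simpa [hC, hwdef] using ht)
  have hAmem : A.1 ∈ Icc A.1 A.2 := ⟨le_rfl, (hsubN A (Or.inl rfl)).2.1.le⟩
  have hBmem : B.1 ∈ Icc B.1 B.2 := ⟨le_rfl, (hsubN B (Or.inr (Or.inl rfl))).2.1.le⟩
  have hCmem : C.1 ∈ Icc C.1 C.2 := ⟨le_rfl, (hsubN C (Or.inr (Or.inr rfl))).2.1.le⟩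
  have hg₂A : g₂ A.1 = q := hvA _ hAmem
  have hg₂B : g₂ B.1 = f := hvB _ hBmem
  have hg₂C : g₂ C.1 = q := hvC _ hCmem
  -- membership of the old zone's points in the g-unchanged region
  have hzq : ∀ t ∈ Icc z.1 z.2, g t = q := by
    intro t ht
    rw [← hzsame t ht]
    exact hcst z hz t ht
  refine ⟨g₂, Z₂, ⟨hg₂c, ?_, ?_, ?_, ?_, ?_, ?_, ?_⟩, ?_, ?_⟩
  · -- bounds
    intro y hy
    rcases hmemZ₂ y hy with hN | hN | hN | ⟨hy₁, _⟩
    · obtain ⟨h1, h2, h3⟩ := hsubN y (Or.inl hN)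
      exact ⟨hz0.trans h1, h2, h3.trans hz1⟩
    · obtain ⟨h1, h2, h3⟩ := hsubN y (Or.inr (Or.inl hN))
      exact ⟨hz0.trans h1, h2, h3.trans hz1⟩
    · obtain ⟨h1, h2, h3⟩ := hsubN y (Or.inr (Or.inr hN))
      exact ⟨hz0.trans h1, h2, h3.trans hz1⟩
    · exact hbnd y hy₁
  · -- disjointness
    have hd_on : ∀ z' ∈ Z₁, z' ≠ z → ∀ y : ℝ × ℝ, y = A ∨ y = B ∨ y = C →
        z'.2 < y.1 ∨ y.2 < z'.1 := by
      intro z' hz' hne y hyN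
      obtain ⟨h1, _, h3⟩ := hsubN y hyN
      rcases hdisj z' hz' z hz hne with h' | h'
      · exact Or.inl (h'.trans_le h1)
      · exact Or.inr (lt_of_le_of_lt h3 h')
    intro y hy y' hy' hne
    rcases hmemZ₂ y hy with hN | hN | hN | ⟨hy₁, hynz⟩ <;>
      rcases hmemZ₂ y' hy' with hN' | hN' | hN' | ⟨hy'₁, hy'nz⟩
    all_goals try (exact absurd (hN.trans hN'.symm) hne)
    -- remaining cases
    · subst hN; subst hN'; left; simp only [hA, hB]; linarith
    · subst hN; subst hN'; left; simp only [hA, hC]; linarith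
    · subst hN
      rcases hd_on y' hy'₁ hy'nz A (Or.inl rfl) with h' | h'
      · exact Or.inr h'
      · exact Or.inl h'
    · subst hN; subst hN'; right; simp only [hA, hB]; linarith
    · subst hN; subst hN'; left; simp only [hB, hC]; linarith
    · subst hN
      rcases hd_on y' hy'₁ hy'nz B (Or.inr (Or.inl rfl)) with h' | h'
      · exact Or.inr h'
      · exact Or.inl h'
    · subst hN; subst hN'; right; simp only [hA, hC]; linarith
    · subst hN; subst hN'; right; simp only [hB, hC]; linarith
    · subst hN
      rcases hd_on y' hy'₁ hy'nz C (Or.inr (Or.inr rfl)) with h' | h'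
      · exact Or.inr h'
      · exact Or.inl h'
    · subst hN'
      exact hd_on y hy₁ hynz A (Or.inl rfl)
    · subst hN'
      exact hd_on y hy₁ hynz B (Or.inr (Or.inl rfl))
    · subst hN'
      exact hd_on y hy₁ hynz C (Or.inr (Or.inr rfl))
    · exact hdisj y hy₁ y' hy'₁ hne
  · -- constancy
    intro y hy t ht
    rcases hmemZ₂ y hy with hN | hN | hN | ⟨hy₁, hynz⟩
    · subst hN; rw [hvA t ht, hg₂A]
    · subst hN; rw [hvB t ht, hg₂B]
    · subst hN; rw [hvC t ht, hg₂C]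
    · rw [hg₂old y hy₁ hynz t ht, hg₂old y hy₁ hynz y.1 ⟨le_rfl, (hbnd y hy₁).2.1.le⟩]
      exact hcst y hy₁ t ht
  · -- values in E
    intro y hy
    rcases hmemZ₂ y hy with hN | hN | hN | ⟨hy₁, hynz⟩
    · subst hN; rw [hg₂A]; exact hqE
    · subst hN; rw [hg₂B]; exact hf
    · subst hN; rw [hg₂C]; exact hqE
    · rw [hg₂old y hy₁ hynz y.1 ⟨le_rfl, (hbnd y hy₁).2.1.le⟩]
      exact hval y hy₁
  · -- density
    intro e he
    obtain ⟨ze, hze, hzed, hzesame⟩ := hdens e he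
    by_cases hzez : ze = z
    · rw [hzez] at hzed
      refine ⟨A, by simp [hZ₂], ?_, ?_⟩
      · show dist (g z.1) e ≤ ε
        exact hzed
      · intro t ht
        have htz : t ∈ Icc z.1 z.2 :=
          ⟨le_trans (le_of_eq (by simp [hA])) ht.1, ht.2.trans (hsubN A (Or.inl rfl)).2.2⟩
        rw [hvA t ht, hzq t htz]
    · refine ⟨ze, by simp [hZ₂, Finset.mem_erase, hzez, hze], hzed, ?_⟩
      intro t ht
      rw [hg₂old ze hze hzez t ht]
      exact hzesame t ht
  · -- V and r
    intro t
    by_cases htz : t ∈ Icc z.1 z.2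
    · obtain ⟨s, hs⟩ := hin t htz
      exact ⟨hs ▸ hpV s, by rw [← hs]; exact hpr s⟩
    · rw [hout t htz]
      exact hVr t
  · -- movement
    intro t
    by_cases htz : t ∈ Icc z.1 z.2
    · obtain ⟨s, hs⟩ := hin t htz
      rw [hzq t htz, ← hs]
      exact hpmove s
    · rw [hout t htz]
      exact hmove t
  · -- f is covered
    exact ⟨B, by simp [hZ₂], hg₂B⟩
  · -- persistence
    intro x ⟨z', hz', hzx⟩
    by_cases hz'z : z' = z
    · subst hz'z
      exact ⟨A, by simp [hZ₂], by rw [hg₂A, ← hzx]⟩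
    · refine ⟨z', by simp [hZ₂, Finset.mem_erase, hz'z, hz'], ?_⟩
      rw [hg₂old z' hz' hz'z z'.1 ⟨le_rfl, (hbnd z' hz').2.1.le⟩, hzx]


lemma stmt14_inner {E V : Set X} {r ρ ε : ℝ}
    (hpath : ∀ q ∈ E, ∀ f ∈ E, dist q f ≤ ε →
      ∃ p : Path q f, (∀ s, p s ∈ V) ∧ (∀ s, dist (p s) q ≤ ρ) ∧
        (∀ s, ∃ e ∈ E, dist (p s) e ≤ r))
    (g : ℝ → X) (F : Finset X) :
    ↑F ⊆ E → ∀ g₁ Z₁, stmt14TINV E V r ρ ε g g₁ Z₁ →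
      ∃ g₂ Z₂, stmt14TINV E V r ρ ε g g₂ Z₂ ∧ (∀ f ∈ F, ∃ z ∈ Z₂, g₂ z.1 = f) ∧
        (∀ x, (∃ z ∈ Z₁, g₁ z.1 = x) → ∃ z ∈ Z₂, g₂ z.1 = x) := by
  classical
  induction F using Finset.induction_on with
  | empty =>
      intro _ g₁ Z₁ h
      exact ⟨g₁, Z₁, h, by simp, fun x hx => hx⟩
  | insert f F hfF ih =>
      intro hsub g₁ Z₁ h
      have hfE : f ∈ E := hsub (by simp)
      have hF'E : ↑F ⊆ E := fun x hx => hsub (by simp [hx])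
      obtain ⟨g', Z', h', hfz, hpers⟩ := stmt14_step hpath h hfE
      obtain ⟨g₂, Z₂, h₂, hcov₂, hpers₂⟩ := ih hF'E g' Z' h'
      refine ⟨g₂, Z₂, h₂, ?_, fun x hx => hpers₂ x (hpers x hx)⟩
      intro f' hf'
      rcases Finset.mem_insert.mp hf' with rfl | hf'F
      · exact hpers₂ f' hfz
      · exact hcov₂ f' hf'F

lemma stmt14_stage {E V : Set X} {r ρ ε ε' : ℝ}
    (hEcomp : IsCompact E) (hρ : 0 ≤ ρ) (hε' : 0 < ε')
    (hpath : ∀ q ∈ E, ∀ f ∈ E, dist q f ≤ ε →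
      ∃ p : Path q f, (∀ s, p s ∈ V) ∧ (∀ s, dist (p s) q ≤ ρ) ∧
        (∀ s, ∃ e ∈ E, dist (p s) e ≤ r))
    {g : ℝ → X} {Z : Finset (ℝ × ℝ)} (h : stmt14TINV E V r 0 ε g g Z) :
    ∃ g' Z', stmt14TINV E V r 0 ε' g' g' Z' ∧ ∀ t, dist (g' t) (g t) ≤ ρ := by
  classical
  obtain ⟨t, ht⟩ := hEcomp.elim_finite_subcover (fun e : E => ball (e : X) ε')
    (fun _ => isOpen_ball) (fun e he => mem_iUnion.mpr ⟨⟨e, he⟩, mem_ball_self hε'⟩)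
  set F : Finset X := t.image Subtype.val with hF
  have hFE : ↑F ⊆ E := by
    intro x hx
    simp only [hF, Finset.coe_image, mem_image] at hx
    obtain ⟨e, _, rfl⟩ := hx
    exact e.2
  have hnet : ∀ e ∈ E, ∃ f ∈ F, dist e f < ε' := by
    intro e he
    obtain ⟨i, hi⟩ := mem_iUnion₂.mp (ht he)
    exact ⟨(i : X), Finset.mem_image_of_mem _ hi.1, hi.2⟩
  obtain ⟨hgc, hbnd, hdisj, hcst, hval, hdens, hVr, _⟩ := h
  have hρTINV : stmt14TINV E V r ρ ε g g Z :=
    ⟨hgc, hbnd, hdisj, hcst, hval, hdens, hVr, fun t => by simp [hρ]⟩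
  obtain ⟨g₂, Z₂, h₂, hcov, _⟩ := stmt14_inner hpath g F hFE g Z hρTINV
  obtain ⟨hg₂c, hbnd₂, hdisj₂, hcst₂, hval₂, _, hVr₂, hmove₂⟩ := h₂
  refine ⟨g₂, Z₂, ⟨hg₂c, hbnd₂, hdisj₂, hcst₂, hval₂, ?_, hVr₂, fun t => by simp⟩, hmove₂⟩
  intro e he
  obtain ⟨f, hfF, hef⟩ := hnet e he
  obtain ⟨z, hzZ, hzf⟩ := hcov f hfF
  refine ⟨z, hzZ, ?_, fun t _ => rfl⟩
  rw [hzf, dist_comm]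
  exact hef.le

lemma stmt14_locconn {G : ℝ → X} (hG : Continuous G) :
    LocallyConnectedSpace ↥(G '' Icc (0:ℝ) 1) := by
  classical
  set Y : Set X := G '' Icc (0:ℝ) 1 with hY
  rw [locallyConnectedSpace_iff_connected_subsets]
  rintro ⟨y, hyY⟩ U hU
  obtain ⟨O, hOn, hOU⟩ := (mem_nhds_subtype Y ⟨y, hyY⟩ U).mp hU
  obtain ⟨O', hO'O, hO'open, hyO'⟩ := _root_.mem_nhds_iff.mp hOn
  set T : Set ℝ := Icc (0:ℝ) 1 ∩ G ⁻¹' {y} with hT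
  have hTcomp : IsCompact T := isCompact_Icc.inter_right (isClosed_singleton.preimage hG)
  have hkey : ∀ τ : T, ∃ δ, 0 < δ ∧ ∀ u, dist u (τ : ℝ) < δ → G u ∈ O' := by
    rintro ⟨τ, hτIcc, hτy⟩
    have hGτ : G τ ∈ O' := by
      rw [mem_preimage, mem_singleton_iff] at hτy
      rw [hτy]; exact hyO'
    have h2 : G ⁻¹' O' ∈ 𝓝 τ := hG.continuousAt.preimage_mem_nhds (hO'open.mem_nhds hGτ)
    obtain ⟨δ, hδ, hball⟩ := Metric.mem_nhds_iff.mp h2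
    exact ⟨δ, hδ, fun u hu => hball hu⟩
  choose δ hδ0 hδs using hkey
  obtain ⟨s, hs⟩ := hTcomp.elim_finite_subcover
    (fun τ : T => Ioo ((τ : ℝ) - δ τ/3) ((τ : ℝ) + δ τ/3)) (fun _ => isOpen_Ioo)
    (fun τ hτ => mem_iUnion.mpr ⟨⟨τ, hτ⟩, by
      constructor <;> simp <;> linarith [hδ0 ⟨τ, hτ⟩]⟩)
  set piece : T → Set X := fun τ =>
    G '' (Icc ((τ : ℝ) - δ τ/3) ((τ : ℝ) + δ τ/3) ∩ Icc 0 1) with hpiece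
  set N : Set X := ⋃ τ ∈ s, piece τ with hN
  have hy_piece : ∀ τ : T, y ∈ piece τ := by
    intro τ
    refine ⟨(τ : ℝ), ⟨⟨by linarith [hδ0 τ], by linarith [hδ0 τ]⟩, τ.2.1⟩, ?_⟩
    have := τ.2.2
    rwa [mem_preimage, mem_singleton_iff] at this
  have hNsubO' : N ⊆ O' := by
    intro x hx
    obtain ⟨τ, hτs, u, ⟨hu1, _⟩, rfl⟩ := mem_iUnion₂.mp hx
    have hd : dist u (τ : ℝ) ≤ δ τ/3 := by
      rw [Real.dist_eq, abs_le]
      constructor <;> [linarith [hu1.1]; linarith [hu1.2]]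
    exact hδs τ u (hd.trans_lt (by linarith [hδ0 τ]))
  have hNsubY : N ⊆ Y := by
    intro x hx
    obtain ⟨τ, _, u, ⟨_, hu2⟩, rfl⟩ := mem_iUnion₂.mp hx
    exact mem_image_of_mem G hu2
  have hNpre : IsPreconnected N := by
    have : N = ⋃₀ (piece '' ↑s) := by rw [sUnion_image, hN]; simp
    rw [this]
    refine isPreconnected_sUnion y _ ?_ ?_
    · rintro S ⟨τ, _, rfl⟩
      exact hy_piece τ
    · rintro S ⟨τ, _, rfl⟩
      apply IsPreconnected.image _ G hG.continuousOn
      rw [Icc_inter_Icc]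
      exact isPreconnected_Icc
  -- the complement trick: N is a neighborhood of y within Y
  set Cpt : Set ℝ := Icc 0 1 \ ⋃ τ ∈ s, Ioo ((τ : ℝ) - δ τ/3) ((τ : ℝ) + δ τ/3) with hCpt
  have hCptcomp : IsCompact Cpt :=
    isCompact_Icc.diff (isOpen_biUnion fun _ _ => isOpen_Ioo)
  have hDclosed : IsClosed (G '' Cpt) := (hCptcomp.image hG).isClosed
  have hyD : y ∉ G '' Cpt := by
    rintro ⟨u, ⟨huIcc, huNot⟩, huy⟩
    have huT : u ∈ T := ⟨huIcc, by rw [mem_preimage, mem_singleton_iff, huy]⟩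
    exact huNot (by simpa using hs huT)
  have hWnhds : (Subtype.val ⁻¹' N : Set Y) ∈ 𝓝 (⟨y, hyY⟩ : Y) := by
    rw [_root_.mem_nhds_iff]
    refine ⟨Subtype.val ⁻¹' (G '' Cpt)ᶜ, ?_, ?_, ?_⟩
    · rintro ⟨y', hy'Y⟩ hy'
      simp only [mem_preimage, mem_compl_iff] at hy' ⊢
      obtain ⟨u, huIcc, rfl⟩ := hy'Y
      have huCpt : u ∉ Cpt := fun hc => hy' (mem_image_of_mem G hc)
      have : u ∈ ⋃ τ ∈ s, Ioo ((τ : ℝ) - δ τ/3) ((τ : ℝ) + δ τ/3) := by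
        by_contra hnot
        exact huCpt ⟨huIcc, hnot⟩
      obtain ⟨τ, hτs, hu⟩ := mem_iUnion₂.mp this
      exact mem_iUnion₂.mpr ⟨τ, hτs, mem_image_of_mem G ⟨⟨hu.1.le, hu.2.le⟩, huIcc⟩⟩
    · exact hDclosed.isOpen_compl.preimage continuous_subtype_val
    · simpa using hyD
  refine ⟨Subtype.val ⁻¹' N, hWnhds, ?_, ?_⟩
  · rw [← IsInducing.subtypeVal.isPreconnected_image]
    rwa [Subtype.image_preimage_coe, inter_eq_right.mpr hNsubY]
  · intro x hx
    exact hOU (mem_preimage.mpr (hO'O (hNsubO' hx)))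

end aux

/-- Let `X` be a connected, locally connected, locally compact,
second-countable metrizable space, `E ⊆ X` a continuum, and `V` a connected open set
containing `E`, with compact closure and locally arcwise-connected. Then there is a
continuous surjection `g : [0,1] → F₀` onto a set `F₀` with `E ⊆ F₀ ⊆ V`; consequently
`F₀` is a locally connected continuum containing `E` and contained in `V`. -/
theorem stmt14 {X : Type*} [TopologicalSpace X] [ConnectedSpace X]
    [LocallyConnectedSpace X] [LocallyCompactSpace X] [SecondCountableTopology X]
    [TopologicalSpace.MetrizableSpace X]
    (E V : Set X) (hEcomp : IsCompact E) (hEconn : IsConnected E)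
    (hVopen : IsOpen V) (hVconn : IsConnected V) (hEV : E ⊆ V)
    (hVclcomp : IsCompact (closure V))
    (hVlac : LocPathConnectedSpace V) :
    ∃ (F₀ : Set X) (g : Set.Icc (0 : ℝ) 1 → X),
      Continuous g ∧ Set.range g = F₀ ∧ E ⊆ F₀ ∧ F₀ ⊆ V ∧
      IsCompact F₀ ∧ IsConnected F₀ ∧ LocallyConnectedSpace F₀ := by
  classical
  letI : MetricSpace X := TopologicalSpace.metrizableSpaceMetric X
  have hE0 : E.Nonempty := hEconn.nonempty
  obtain ⟨e₀, he₀⟩ := hE0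
  obtain ⟨rr, hrr, hthick⟩ := hEcomp.exists_thickening_subset_open hVopen hEV
  set R : ℝ := rr/2 with hRdef
  have hR0 : 0 < R := half_pos hrr
  -- parameters of the construction
  set ρseq : ℕ → ℝ := fun n => min ((1/2 : ℝ)^n) R with hρseq
  have hρ0 : ∀ n, 0 < ρseq n := fun n => lt_min (by positivity) hR0
  have hρle : ∀ n, ρseq n ≤ (1/2 : ℝ)^n := fun n => min_le_left _ _
  have hρR : ∀ n, ρseq n ≤ R := fun n => min_le_right _ _
  have hULP : ∀ n : ℕ, ∃ δ, 0 < δ ∧ ∀ x ∈ E, ∀ y ∈ E, dist x y < δ →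
      ∃ p : Path x y, (∀ s, p s ∈ V) ∧ (∀ s, dist (p s) x < ρseq n) := fun n =>
    stmt14_ulp hEcomp hVopen hEV hVlac (hρ0 n)
  choose δf hδf0 hδfs using hULP
  set εseq : ℕ → ℝ := fun n => min ((1/2 : ℝ)^n) (δf n / 2) with hεseq
  have hε0 : ∀ n, 0 < εseq n := fun n => lt_min (by positivity) (half_pos (hδf0 n))
  have hεle : ∀ n, εseq n ≤ (1/2 : ℝ)^n := fun n => min_le_left _ _
  -- path provider for stage n
  have hpathn : ∀ n, ∀ q ∈ E, ∀ f ∈ E, dist q f ≤ εseq n →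
      ∃ p : Path q f, (∀ s, p s ∈ V) ∧ (∀ s, dist (p s) q ≤ ρseq n) ∧
        (∀ s, ∃ e ∈ E, dist (p s) e ≤ R) := by
    intro n q hq f hf hd
    have : dist q f < δf n :=
      hd.trans_lt (lt_of_le_of_lt (min_le_right _ _) (half_lt_self (hδf0 n)))
    obtain ⟨p, h1, h2⟩ := hδfs n q hq f hf this
    exact ⟨p, h1, fun s => (h2 s).le, fun s => ⟨q, hq, (h2 s).le.trans (hρR n)⟩⟩
  -- base state: the constant curve at e₀
  set D : ℝ := Metric.diam E + 1 with hDdef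
  have hbase : stmt14TINV E V R 0 D (fun _ => e₀) (fun _ => e₀) {((0:ℝ), (1:ℝ))} := by
    refine ⟨continuous_const, ?_, ?_, ?_, ?_, ?_, ?_, ?_⟩
    · intro z hz
      rw [Finset.mem_singleton] at hz
      subst hz
      norm_num
    · intro z hz z' hz' hne
      rw [Finset.mem_singleton] at hz hz'
      exact absurd (hz.trans hz'.symm) hne
    · intro z _ t _
      rfl
    · intro z _
      exact he₀
    · intro e he
      refine ⟨((0:ℝ),(1:ℝ)), Finset.mem_singleton_self _, ?_, fun _ _ => rfl⟩
      calc dist e₀ e ≤ Metric.diam E := Metric.dist_le_diam_of_mem hEcomp.isBounded he₀ he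
        _ ≤ D := by rw [hDdef]; linarith
    · exact fun t => ⟨hEV he₀, e₀, he₀, by simp [hR0.le]⟩
    · exact fun t => by simp
  -- base path provider, via chains in E
  have hpathbase : ∀ q ∈ E, ∀ f ∈ E, dist q f ≤ D →
      ∃ p : Path q f, (∀ s, p s ∈ V) ∧ (∀ s, dist (p s) q ≤ Metric.diam E + R + 1) ∧
        (∀ s, ∃ e ∈ E, dist (p s) e ≤ R) := by
    intro q hq f hf _
    obtain ⟨p, hpV, hpE⟩ := stmt14_chainpath hEcomp hEconn hVopen hEV hVlac hR0 q hq f hf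
    refine ⟨p, hpV, fun s => ?_, hpE⟩
    obtain ⟨e, he, hde⟩ := hpE s
    calc dist (p s) q ≤ dist (p s) e + dist e q := dist_triangle _ _ _
      _ ≤ R + Metric.diam E := add_le_add hde (Metric.dist_le_diam_of_mem hEcomp.isBounded he hq)
      _ ≤ Metric.diam E + R + 1 := by linarith
  obtain ⟨g₀, Z₀, hP₀', _⟩ := stmt14_stage hEcomp
    (by positivity : (0:ℝ) ≤ Metric.diam E + R + 1) (hε0 0) hpathbase hbase
  -- the inductive sequence of curves
  set P : ℕ → ((ℝ → X) × Finset (ℝ × ℝ)) → Prop :=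
    fun n gZ => stmt14TINV E V R 0 (εseq n) gZ.1 gZ.1 gZ.2 with hPdef
  have hstep : ∀ n gZ, P n gZ → ∃ gZ' : (ℝ → X) × Finset (ℝ × ℝ),
      P (n+1) gZ' ∧ ∀ t, dist (gZ'.1 t) (gZ.1 t) ≤ ρseq n := by
    intro n gZ h
    obtain ⟨g', Z', h', hmove⟩ := stmt14_stage hEcomp (hρ0 n).le (hε0 (n+1)) (hpathn n) h
    exact ⟨(g', Z'), h', hmove⟩
  choose next hnextP hnextm using hstep
  let u : ∀ n : ℕ, {gZ : (ℝ → X) × Finset (ℝ × ℝ) // P n gZ} :=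
    fun n => Nat.rec ⟨(g₀, Z₀), hP₀'⟩ (fun n ih => ⟨next n ih.1 ih.2, hnextP n ih.1 ih.2⟩) n
  set gs : ℕ → ℝ → X := fun n => (u n).1.1 with hgs
  have hP : ∀ n, P n (u n).1 := fun n => (u n).2
  have hm : ∀ n t, dist (gs (n+1) t) (gs n t) ≤ ρseq n := fun n t =>
    hnextm n (u n).1 (u n).2 t
  have hbound : ∀ n m t, n ≤ m →
      dist (gs n t) (gs m t) ≤ 2*(1/2:ℝ)^n - 2*(1/2:ℝ)^m := by
    intro n m t h
    induction m, h using Nat.le_induction with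
    | base => simp
    | succ m hnm ih =>
        have h1 := hm m t
        have h2 : (1/2:ℝ)^(m+1) = (1/2:ℝ)^m * (1/2) := pow_succ _ _
        have h3 : ρseq m ≤ (1/2:ℝ)^m := hρle m
        calc dist (gs n t) (gs (m+1) t)
            ≤ dist (gs n t) (gs m t) + dist (gs m t) (gs (m+1) t) := dist_triangle _ _ _
          _ = dist (gs n t) (gs m t) + dist (gs (m+1) t) (gs m t) := by rw [dist_comm (gs m t)]
          _ ≤ (2*(1/2:ℝ)^n - 2*(1/2:ℝ)^m) + ρseq m := add_le_add ih h1
          _ ≤ 2*(1/2:ℝ)^n - 2*(1/2:ℝ)^(m+1) := by rw [h2]; linarith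
  have hcauchy : ∀ t, CauchySeq (fun n => gs n t) := by
    intro t
    apply cauchySeq_of_le_tendsto_0 (fun n => 2*(1/2:ℝ)^n)
    · intro n m N hNn hNm
      have hmono : ∀ a b : ℕ, a ≤ b → dist (gs a t) (gs b t) ≤ 2*(1/2:ℝ)^N → True := fun _ _ _ _ => trivial
      rcases le_total n m with h | h
      · have := hbound n m t h
        have hp : (1/2:ℝ)^n ≤ (1/2:ℝ)^N := pow_le_pow_of_le_one (by norm_num) (by norm_num) hNn
        have hq : 0 ≤ (1/2:ℝ)^m := by positivity
        linarith
      · have := hbound m n t h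
        have hp : (1/2:ℝ)^m ≤ (1/2:ℝ)^N := pow_le_pow_of_le_one (by norm_num) (by norm_num) hNm
        have hq : 0 ≤ (1/2:ℝ)^n := by positivity
        rw [dist_comm]
        linarith
    · have : Filter.Tendsto (fun n : ℕ => (1/2:ℝ)^n) Filter.atTop (𝓝 0) :=
        tendsto_pow_atTop_nhds_zero_of_lt_one (by norm_num) (by norm_num)
      simpa using this.const_mul 2
  -- the compact set where everything lives
  set C₀ : Set X := closure V ∩ {x | Metric.infDist x E ≤ R} with hC₀def
  have hC₀comp : IsCompact C₀ :=
    hVclcomp.inter_right (isClosed_le (Metric.continuous_infDist_pt E) continuous_const)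
  have hmemC₀ : ∀ n t, gs n t ∈ C₀ := by
    intro n t
    obtain ⟨hV, e, he, hde⟩ := (hP n).2.2.2.2.2.2.1 t
    exact ⟨subset_closure hV, le_trans (Metric.infDist_le_dist_of_mem he) hde⟩
  have hC₀V : C₀ ⊆ V := by
    intro x hx
    apply hthick
    rw [Metric.mem_thickening_iff_infDist_lt ⟨e₀, he₀⟩]
    calc Metric.infDist x E ≤ R := hx.2
      _ < rr := by rw [hRdef]; linarith
  have hex : ∀ t, ∃ x ∈ C₀, Filter.Tendsto (fun n => gs n t) Filter.atTop (𝓝 x) :=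
    fun t => cauchySeq_tendsto_of_isComplete hC₀comp.isComplete
      (fun n => hmemC₀ n t) (hcauchy t)
  choose Gf hGC hGt using hex
  have hlim : ∀ n t, dist (gs n t) (Gf t) ≤ 2*(1/2:ℝ)^n := by
    intro n t
    apply le_of_tendsto (tendsto_const_nhds.dist (hGt t))
    filter_upwards [Filter.eventually_ge_atTop n] with m hm'
    have := hbound n m t hm'
    have : 0 ≤ (1/2:ℝ)^m := by positivity
    linarith [hbound n m t hm']
  have hunif : TendstoUniformly gs Gf Filter.atTop := by
    rw [Metric.tendstoUniformly_iff]
    intro ε hε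
    obtain ⟨n₀, hn₀⟩ := exists_pow_lt_of_lt_one (show (0:ℝ) < ε/2 by linarith)
      (by norm_num : (1/2:ℝ) < 1)
    filter_upwards [Filter.eventually_ge_atTop n₀] with m hm' t
    have h1 : (1/2:ℝ)^m ≤ (1/2:ℝ)^n₀ := pow_le_pow_of_le_one (by norm_num) (by norm_num) hm'
    calc dist (Gf t) (gs m t) = dist (gs m t) (Gf t) := dist_comm _ _
      _ ≤ 2*(1/2:ℝ)^m := hlim m t
      _ < ε := by linarith
  have hGcont : Continuous Gf :=
    hunif.continuous (Filter.Eventually.of_forall fun n => (hP n).1).frequently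
  -- E is contained in the image
  have hEsub : E ⊆ Gf '' Icc (0:ℝ) 1 := by
    intro e he
    have hz : ∀ n, ∃ t₁, t₁ ∈ Icc (0:ℝ) 1 ∧ dist (gs n t₁) e ≤ εseq n := by
      intro n
      obtain ⟨z, hzZ, hzd, _⟩ := (hP n).2.2.2.2.2.1 e he
      obtain ⟨h1, h2, h3⟩ := (hP n).2.1 z hzZ
      exact ⟨z.1, ⟨h1, h2.le.trans h3⟩, hzd⟩
    choose tn htn hdtn using hz
    obtain ⟨tstar, htstar, φ, hφ, hconv⟩ := isCompact_Icc.tendsto_subseq htn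
    have h1 : Filter.Tendsto (fun j => Gf (tn (φ j))) Filter.atTop (𝓝 (Gf tstar)) :=
      ((hGcont.tendsto tstar).comp hconv)
    have h2 : Filter.Tendsto (fun j => Gf (tn (φ j))) Filter.atTop (𝓝 e) := by
      rw [tendsto_iff_dist_tendsto_zero]
      apply squeeze_zero (fun j => dist_nonneg) (g := fun j => 3*(1/2:ℝ)^j)
      · intro j
        have ha : dist (Gf (tn (φ j))) e ≤
            dist (Gf (tn (φ j))) (gs (φ j) (tn (φ j))) + dist (gs (φ j) (tn (φ j))) e :=
          dist_triangle _ _ _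
        have hb : dist (Gf (tn (φ j))) (gs (φ j) (tn (φ j))) ≤ 2*(1/2:ℝ)^(φ j) := by
          rw [dist_comm]; exact hlim (φ j) (tn (φ j))
        have hc : dist (gs (φ j) (tn (φ j))) e ≤ (1/2:ℝ)^(φ j) :=
          (hdtn (φ j)).trans (hεle (φ j))
        have hd : (1/2:ℝ)^(φ j) ≤ (1/2:ℝ)^j :=
          pow_le_pow_of_le_one (by norm_num) (by norm_num) (hφ.le_apply)
        linarith
      · have : Filter.Tendsto (fun j : ℕ => (1/2:ℝ)^j) Filter.atTop (𝓝 0) :=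
          tendsto_pow_atTop_nhds_zero_of_lt_one (by norm_num) (by norm_num)
        simpa using this.const_mul 3
    have : e = Gf tstar := tendsto_nhds_unique h2 h1
    exact ⟨tstar, htstar, this.symm⟩
  -- assembly
  refine ⟨Gf '' Icc (0:ℝ) 1, fun t => Gf t, hGcont.comp continuous_subtype_val,
    (Set.image_eq_range Gf (Icc (0:ℝ) 1)).symm, hEsub, ?_, ?_, ?_, stmt14_locconn hGcont⟩
  · rintro x ⟨t, ht, rfl⟩
    exact hC₀V (hGC t)
  · exact isCompact_Icc.image hGcont
  · exact ⟨⟨e₀, hEsub he₀⟩, isPreconnected_Icc.image Gf hGcont.continuousOn⟩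
end
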